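/- Let p : ℝ → ℝ be a 1-periodic trigonometric polynomial with ∫₀¹ p(x)dx = 0. Then there is a constant C = C(p) with the following property: for every positive integer n and all naturals m' ≤ m, letting 𝒢_m denote the σ-algebra on [0,1) generated by the dyadic intervals [v/2^m, (v+1)/2^m), v = 0, …, 2^m − 1, there exists a function φ : [0,1) → ℝ that is constant on each interval [v/2^m, (v+1)/2^m), satisfies 𝔼[φ | 𝒢_{m'}] = 0 Lebesgue-almost everywhere, and satisfies sup_{x∈[0,1)} |φ(x) − p(nx)| ≤ C·(n/2^m + 2^{m'}/n). -/

import Mathlib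

open MeasureTheory Finset Real Set

/-- The σ-algebra on ℝ generated by the dyadic intervals [v/2^m, (v+1)/2^m), v = 0,…,2^m − 1. -/
def dyadicSigma (m : ℕ) : MeasurableSpace ℝ :=
  MeasurableSpace.generateFrom
    {s : Set ℝ | ∃ v : ℕ, v < 2 ^ m ∧ s = Set.Ico ((v : ℝ) / 2 ^ m) (((v : ℝ) + 1) / 2 ^ m)}

/-- The mean-zero trigonometric polynomial p(x) = Σ_{j=1}^d (a_j cos(2πjx) + b_j sin(2πjx)). -/
noncomputable def trigPoly (d : ℕ) (a b : ℕ → ℝ) (x : ℝ) : ℝ :=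
  ∑ j ∈ Finset.Icc 1 d,
    (a j * Real.cos (2 * Real.pi * j * x) + b j * Real.sin (2 * Real.pi * j * x))

/-!
Write `q t = p (n t)`, let `E_k q x` be the mean of `q` over the level-`k` dyadic interval
containing `x`, and take `φ = E_m q - E_{m'} q`. Every level-`m'` interval is a union of
level-`m` intervals, so `E_m q` and `E_{m'} q` have the same integral as `q` over each level-`m'`
interval and over `[0,1)`; as these intervals form a π-system generating `𝒢_{m'}`, the
conditional expectation of `φ` vanishes. Since `p` is Lipschitz, `|E_m q - q| = O(n / 2^m)`;
since `p` has a bounded antiderivative, every integral of `q` is `O(1/n)`, so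
`|E_{m'} q| = O(2^{m'} / n)`.
-/

open Function

section TrigPoly

variable (d : ℕ) (a b : ℕ → ℝ)

noncomputable def trigPolyCoeffNorm : ℝ := ∑ j ∈ Icc 1 d, (|a j| + |b j|)

lemma trigPolyCoeffNorm_nonneg : 0 ≤ trigPolyCoeffNorm d a b :=
  sum_nonneg fun _ _ => by positivity

lemma abs_trigPoly_le (x : ℝ) : |trigPoly d a b x| ≤ trigPolyCoeffNorm d a b := by
  refine (abs_sum_le_sum_abs _ _).trans (sum_le_sum fun j _ => (abs_add_le _ _).trans ?_)
  rw [abs_mul, abs_mul]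
  gcongr
  · exact mul_le_of_le_one_right (abs_nonneg _) (abs_cos_le_one _)
  · exact mul_le_of_le_one_right (abs_nonneg _) (abs_sin_le_one _)

lemma hasDerivAt_trigPoly (x : ℝ) :
    HasDerivAt (trigPoly d a b)
      (trigPoly d (fun j => 2 * π * j * b j) (fun j => -(2 * π * j * a j)) x) x := by
  unfold trigPoly
  refine HasDerivAt.fun_sum fun j _ => ?_
  have hlin : HasDerivAt (fun x : ℝ => 2 * π * j * x) (2 * π * j) x := by
    simpa using (hasDerivAt_id x).const_mul (2 * π * j)
  convert ((hlin.cos).const_mul (a j)).add ((hlin.sin).const_mul (b j)) using 1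
  · rfl
  · ring

lemma continuous_trigPoly : Continuous (trigPoly d a b) :=
  continuous_iff_continuousAt.2 fun x => (hasDerivAt_trigPoly d a b x).continuousAt

lemma abs_trigPoly_sub_le (x y : ℝ) :
    |trigPoly d a b x - trigPoly d a b y| ≤
      trigPolyCoeffNorm d (fun j => 2 * π * j * b j) (fun j => -(2 * π * j * a j)) * |x - y| :=
  convex_univ.norm_image_sub_le_of_norm_deriv_le
    (fun z _ => (hasDerivAt_trigPoly d a b z).differentiableAt)
    (fun z _ => (hasDerivAt_trigPoly d a b z).deriv ▸ abs_trigPoly_le _ _ _ z)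
    (mem_univ y) (mem_univ x)

lemma hasDerivAt_trigPoly_antideriv (x : ℝ) :
    HasDerivAt (trigPoly d (fun j => -(b j / (2 * π * j))) (fun j => a j / (2 * π * j)))
      (trigPoly d a b x) x := by
  convert hasDerivAt_trigPoly d _ _ x using 1
  refine sum_congr rfl fun j hj => ?_
  have : (j : ℝ) ≠ 0 := by exact_mod_cast (Nat.one_le_iff_ne_zero.1 (mem_Icc.1 hj).1)
  field_simp

lemma abs_intervalIntegral_trigPoly_le (A B : ℝ) :
    |∫ x in A..B, trigPoly d a b x| ≤
      2 * trigPolyCoeffNorm d (fun j => -(b j / (2 * π * j))) (fun j => a j / (2 * π * j)) := by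
  rw [intervalIntegral.integral_eq_sub_of_hasDerivAt
    (fun x _ => hasDerivAt_trigPoly_antideriv d a b x)
    ((continuous_trigPoly d a b).intervalIntegrable A B)]
  refine (abs_sub _ _).trans ?_
  linarith [abs_trigPoly_le d (fun j => -(b j / (2 * π * j))) (fun j => a j / (2 * π * j)) A,
    abs_trigPoly_le d (fun j => -(b j / (2 * π * j))) (fun j => a j / (2 * π * j)) B]

end TrigPoly

lemma abs_intervalIntegral_comp_mul_le {f : ℝ → ℝ} {B c : ℝ} (hc : 0 < c)
    (hB : ∀ A A', |∫ t in A..A', f t| ≤ B) (A A' : ℝ) : |∫ t in A..A', f (c * t)| ≤ B / c := by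
  rw [intervalIntegral.integral_comp_mul_left f hc.ne', smul_eq_mul, abs_mul, abs_inv,
    abs_of_pos hc, inv_mul_eq_div]
  gcongr
  exact hB _ _

theorem condExp_generateFrom_ae_eq_zero {α E : Type*} [NormedAddCommGroup E] [NormedSpace ℝ E]
    [CompleteSpace E] {m₀ : MeasurableSpace α} {μ : Measure α} [IsFiniteMeasure μ]
    {S : Set (Set α)} (hS : IsPiSystem S) (hSm : ∀ s ∈ S, MeasurableSet s) {f : α → E}
    (hf : Integrable f μ) (hf_univ : ∫ x, f x ∂μ = 0) (hf_S : ∀ s ∈ S, ∫ x in s, f x ∂μ = 0) :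
    μ[f | MeasurableSpace.generateFrom S] =ᵐ[μ] 0 := by
  have hle : MeasurableSpace.generateFrom S ≤ m₀ := MeasurableSpace.generateFrom_le hSm
  have hzero : ∀ s, MeasurableSet[MeasurableSpace.generateFrom S] s → ∫ x in s, f x ∂μ = 0 := by
    refine MeasurableSpace.induction_on_inter rfl hS (by simp) hf_S ?_ ?_
    · intro t ht h0
      rw [setIntegral_compl (hle t ht) hf, hf_univ, h0, sub_zero]
    · intro g hdisj hg h0
      rw [integral_iUnion (fun i => hle _ (hg i)) hdisj hf.integrableOn]
      simp [h0]
  exact (ae_eq_condExp_of_forall_setIntegral_eq hle hf (fun _ _ _ => integrableOn_zero)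
    (fun s hs _ => by simp [hzero s hs]) stronglyMeasurable_zero.aestronglyMeasurable).symm

section Dyadic

def dyadicCell (k : ℕ) (z : ℤ) : Set ℝ := Ico (z / 2 ^ k) ((z + 1) / 2 ^ k)

variable {k l : ℕ} {z : ℤ} {x y : ℝ}

lemma mem_dyadicCell_iff : x ∈ dyadicCell k z ↔ ⌊(2 : ℝ) ^ k * x⌋ = z := by
  rw [Int.floor_eq_iff, dyadicCell, Set.mem_Ico, div_le_iff₀' (by positivity),
    lt_div_iff₀' (by positivity)]

lemma mem_dyadicCell_floor (k : ℕ) (x : ℝ) : x ∈ dyadicCell k ⌊(2 : ℝ) ^ k * x⌋ :=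
  mem_dyadicCell_iff.2 rfl

lemma measurableSet_dyadicCell (k : ℕ) (z : ℤ) : MeasurableSet (dyadicCell k z) :=
  measurableSet_Ico

lemma volume_real_dyadicCell (k : ℕ) (z : ℤ) : volume.real (dyadicCell k z) = (2 ^ k)⁻¹ := by
  rw [dyadicCell, volume_real_Ico_of_le (by gcongr; linarith)]
  field_simp
  ring

lemma abs_sub_le_of_mem_dyadicCell (hx : x ∈ dyadicCell k z) (hy : y ∈ dyadicCell k z) :
    |x - y| ≤ (2 ^ k)⁻¹ := by
  have hlen : ((z : ℝ) + 1) / 2 ^ k = z / 2 ^ k + (2 ^ k)⁻¹ := by ring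
  rw [dyadicCell, Set.mem_Ico, hlen] at hx hy
  rw [abs_sub_le_iff]
  constructor <;> linarith [hx.1, hx.2, hy.1, hy.2]

lemma pairwise_disjoint_dyadicCell (k : ℕ) : Pairwise (Disjoint on dyadicCell k) :=
  fun _ _ hzw => disjoint_left.2 fun _ hz hw =>
    hzw ((mem_dyadicCell_iff.1 hz).symm.trans (mem_dyadicCell_iff.1 hw))

lemma floor_two_pow_mul_of_le (hkl : k ≤ l) (x : ℝ) :
    ⌊(2 : ℝ) ^ k * x⌋ = ⌊(2 : ℝ) ^ l * x⌋ / 2 ^ (l - k) := by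
  have h : (2 : ℝ) ^ k * x = (2 : ℝ) ^ l * x / ((2 ^ (l - k) : ℕ) : ℝ) := by
    rw [eq_div_iff (by positivity), ← pow_sub_mul_pow 2 hkl]
    push_cast
    ring
  rw [h, Int.floor_div_natCast]
  push_cast
  rfl

lemma dyadicCell_eq_biUnion (hkl : k ≤ l) (z : ℤ) :
    dyadicCell k z =
      ⋃ w ∈ Finset.Ico (z * 2 ^ (l - k)) ((z + 1) * 2 ^ (l - k)), dyadicCell l w := by
  ext x
  have h2 : (0 : ℤ) < 2 ^ (l - k) := by positivity
  simp only [mem_iUnion, mem_dyadicCell_iff, exists_prop, exists_eq_right', Finset.mem_Ico,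
    floor_two_pow_mul_of_le hkl x]
  rw [← Int.le_ediv_iff_mul_le h2, ← Int.ediv_lt_iff_lt_mul h2]
  omega

lemma dyadicCell_subset (hkl : k ≤ l) (w : ℤ) : dyadicCell l w ⊆ dyadicCell k (w / 2 ^ (l - k)) :=
  fun x hx => mem_dyadicCell_iff.2 <| by
    rw [floor_two_pow_mul_of_le hkl, mem_dyadicCell_iff.1 hx]

lemma dyadicCell_zero_zero : dyadicCell 0 0 = Set.Ico 0 1 := by
  simp [dyadicCell]

lemma dyadicCell_natCast (k v : ℕ) :
    dyadicCell k v = Ico ((v : ℝ) / 2 ^ k) (((v : ℝ) + 1) / 2 ^ k) := by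
  simp [dyadicCell]

lemma isPiSystem_dyadicCells (k : ℕ) :
    IsPiSystem
      {s : Set ℝ | ∃ v : ℕ, v < 2 ^ k ∧ s = Ico ((v : ℝ) / 2 ^ k) (((v : ℝ) + 1) / 2 ^ k)} := by
  rintro _ ⟨v, hv, rfl⟩ _ ⟨w, -, rfl⟩ ⟨x, hxv, hxw⟩
  rw [← dyadicCell_natCast] at hxv hxw ⊢
  obtain rfl : v = w := by
    exact_mod_cast (mem_dyadicCell_iff.1 hxv).symm.trans (mem_dyadicCell_iff.1 hxw)
  exact ⟨v, hv, by rw [dyadicCell_natCast, inter_self]⟩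

noncomputable def dyadicAverage (k : ℕ) (f : ℝ → ℝ) (x : ℝ) : ℝ :=
  2 ^ k * ∫ t in dyadicCell k ⌊(2 : ℝ) ^ k * x⌋, f t

variable {f : ℝ → ℝ}

lemma dyadicAverage_of_mem (hx : x ∈ dyadicCell k z) :
    dyadicAverage k f x = 2 ^ k * ∫ t in dyadicCell k z, f t := by
  rw [dyadicAverage, mem_dyadicCell_iff.1 hx]

lemma dyadicAverage_eq_of_mem_dyadicCell (hkl : k ≤ l) (hx : x ∈ dyadicCell l z)
    (hy : y ∈ dyadicCell l z) : dyadicAverage k f x = dyadicAverage k f y := by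
  rw [dyadicAverage, dyadicAverage, floor_two_pow_mul_of_le hkl x, floor_two_pow_mul_of_le hkl y,
    mem_dyadicCell_iff.1 hx, mem_dyadicCell_iff.1 hy]

lemma abs_dyadicAverage_le {B : ℝ} (hB : ∀ A A', |∫ t in A..A', f t| ≤ B) (k : ℕ) (x : ℝ) :
    |dyadicAverage k f x| ≤ 2 ^ k * B := by
  rw [dyadicAverage, abs_mul, abs_of_pos (by positivity), dyadicCell, integral_Ico_eq_integral_Ioc,
    ← intervalIntegral.integral_of_le (by gcongr; linarith)]
  gcongr
  exact hB _ _

lemma abs_dyadicAverage_sub_le (hf : Continuous f) {L : ℝ}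
    (hL : ∀ s t, |f s - f t| ≤ L * |s - t|) (k : ℕ) (x : ℝ) :
    |dyadicAverage k f x - f x| ≤ L / 2 ^ k := by
  set z := ⌊(2 : ℝ) ^ k * x⌋
  have hx : x ∈ dyadicCell k z := mem_dyadicCell_floor k x
  have hcell : volume (dyadicCell k z) < ⊤ := measure_Ico_lt_top
  have hfz : IntegrableOn f (dyadicCell k z) := hf.integrableOn_Icc.mono_set Ico_subset_Icc_self
  have hdiff : dyadicAverage k f x - f x = 2 ^ k * ∫ t in dyadicCell k z, (f t - f x) := by
    rw [integral_sub hfz (integrableOn_const hcell.ne), setIntegral_const, volume_real_dyadicCell,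
      dyadicAverage_of_mem hx, smul_eq_mul]
    field_simp
  have hL0 : 0 ≤ L := by simpa using (abs_nonneg _).trans (hL 1 0)
  have hnear : ∀ t ∈ dyadicCell k z, ‖f t - f x‖ ≤ L / 2 ^ k := fun t ht =>
    calc |f t - f x| ≤ L * |t - x| := hL t x
      _ ≤ L * (2 ^ k)⁻¹ := by gcongr; exact abs_sub_le_of_mem_dyadicCell ht hx
      _ = L / 2 ^ k := by ring
  rw [hdiff, abs_mul, abs_of_pos (by positivity)]
  calc (2:ℝ) ^ k * |∫ t in dyadicCell k z, (f t - f x)|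
      ≤ 2 ^ k * (L / 2 ^ k * volume.real (dyadicCell k z)) := by
        gcongr
        exact norm_setIntegral_le_of_norm_le_const hcell hnear
    _ = L / 2 ^ k := by rw [volume_real_dyadicCell]; field_simp

lemma integrableOn_dyadicAverage_self (k : ℕ) (f : ℝ → ℝ) (z : ℤ) :
    IntegrableOn (dyadicAverage k f) (dyadicCell k z) :=
  (integrableOn_const measure_Ico_lt_top.ne).congr_fun (fun _ hx => (dyadicAverage_of_mem hx).symm)
    (measurableSet_dyadicCell k z)

lemma setIntegral_dyadicAverage_self (k : ℕ) (f : ℝ → ℝ) (z : ℤ) :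
    ∫ x in dyadicCell k z, dyadicAverage k f x = ∫ x in dyadicCell k z, f x := by
  rw [setIntegral_congr_fun (measurableSet_dyadicCell k z) (fun _ hx => dyadicAverage_of_mem hx),
    setIntegral_const, volume_real_dyadicCell, smul_eq_mul]
  field_simp

lemma integrableOn_dyadicAverage (hkl : k ≤ l) (f : ℝ → ℝ) (z : ℤ) :
    IntegrableOn (dyadicAverage l f) (dyadicCell k z) := by
  rw [dyadicCell_eq_biUnion hkl, integrableOn_finset_iUnion]
  exact fun w _ => integrableOn_dyadicAverage_self l f w

lemma setIntegral_dyadicAverage (hkl : k ≤ l) (hf : IntegrableOn f (dyadicCell k z)) :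
    ∫ x in dyadicCell k z, dyadicAverage l f x = ∫ x in dyadicCell k z, f x := by
  rw [dyadicCell_eq_biUnion hkl] at hf ⊢
  have hmeas : ∀ w ∈ Finset.Ico (z * 2 ^ (l - k)) ((z + 1) * 2 ^ (l - k)),
      MeasurableSet (dyadicCell l w) := fun w _ => measurableSet_dyadicCell l w
  have hdisj := (pairwise_disjoint_dyadicCell l).set_pairwise
    (Finset.Ico (z * 2 ^ (l - k)) ((z + 1) * 2 ^ (l - k)) : Set ℤ)
  rw [integral_biUnion_finset _ hmeas hdisj fun w _ => integrableOn_dyadicAverage_self l f w,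
    integral_biUnion_finset _ hmeas hdisj (integrableOn_finset_iUnion.1 hf)]
  exact sum_congr rfl fun w _ => setIntegral_dyadicAverage_self l f w

theorem condExp_dyadicAverage_sub_ae_eq_zero (hf : IntegrableOn f (Set.Ico 0 1)) (hkl : k ≤ l) :
    (volume.restrict (Set.Ico (0 : ℝ) 1))[dyadicAverage l f - dyadicAverage k f | dyadicSigma k]
      =ᵐ[volume.restrict (Set.Ico (0 : ℝ) 1)] 0 := by
  rw [← dyadicCell_zero_zero] at hf
  refine condExp_generateFrom_ae_eq_zero (isPiSystem_dyadicCells k)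
    (fun _ ⟨_, _, hs⟩ => hs ▸ measurableSet_Ico)
    (dyadicCell_zero_zero ▸ (integrableOn_dyadicAverage (Nat.zero_le l) f 0).sub
      (integrableOn_dyadicAverage (Nat.zero_le k) f 0)) ?_ ?_
  · rw [← dyadicCell_zero_zero, integral_sub' (integrableOn_dyadicAverage (Nat.zero_le l) f 0)
      (integrableOn_dyadicAverage (Nat.zero_le k) f 0),
      setIntegral_dyadicAverage (Nat.zero_le l) hf, setIntegral_dyadicAverage (Nat.zero_le k) hf,
      sub_self]
  · rintro _ ⟨v, hv, rfl⟩
    have hv0 : (v : ℤ) / 2 ^ (k - 0) = 0 :=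
      Int.ediv_eq_zero_of_lt (by positivity) (by exact_mod_cast hv)
    have hcell : dyadicCell k v ⊆ dyadicCell 0 0 := hv0 ▸ dyadicCell_subset (Nat.zero_le k) v
    rw [← dyadicCell_natCast, ← dyadicCell_zero_zero,
      Measure.restrict_restrict (measurableSet_dyadicCell k v),
      inter_eq_left.2 hcell, integral_sub' (integrableOn_dyadicAverage hkl f v)
      (integrableOn_dyadicAverage le_rfl f v), setIntegral_dyadicAverage hkl (hf.mono_set hcell),
      setIntegral_dyadicAverage le_rfl (hf.mono_set hcell), sub_self]

end Dyadic

theorem dyadic_martingale_approximation (d : ℕ) (a b : ℕ → ℝ) :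
    ∃ C : ℝ, 0 < C ∧ ∀ n : ℕ, 0 < n → ∀ m' m : ℕ, m' ≤ m →
      ∃ φ : ℝ → ℝ,
        (∀ v : ℕ, v < 2 ^ m →
          ∀ x ∈ Set.Ico ((v : ℝ) / 2 ^ m) (((v : ℝ) + 1) / 2 ^ m),
          ∀ y ∈ Set.Ico ((v : ℝ) / 2 ^ m) (((v : ℝ) + 1) / 2 ^ m), φ x = φ y) ∧
        ((volume.restrict (Set.Ico (0:ℝ) 1))[φ | dyadicSigma m']
          =ᵐ[volume.restrict (Set.Ico (0:ℝ) 1)] 0) ∧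
        (∀ x ∈ Set.Ico (0:ℝ) 1,
          |φ x - trigPoly d a b ((n : ℝ) * x)| ≤
            C * ((n : ℝ) / 2 ^ m + (2 : ℝ) ^ m' / (n : ℝ))) := by
  set L := trigPolyCoeffNorm d (fun j => 2 * π * j * b j) (fun j => -(2 * π * j * a j))
  set M := 2 * trigPolyCoeffNorm d (fun j => -(b j / (2 * π * j))) (fun j => a j / (2 * π * j))
  have hL : 0 ≤ L := trigPolyCoeffNorm_nonneg _ _ _
  have hM : 0 ≤ M := mul_nonneg zero_le_two (trigPolyCoeffNorm_nonneg _ _ _)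
  refine ⟨L + M + 1, by positivity, fun n hn m' m hm => ?_⟩
  have hn' : (0 : ℝ) < n := by exact_mod_cast hn
  set q : ℝ → ℝ := fun t => trigPoly d a b (n * t)
  have hq : Continuous q := (continuous_trigPoly d a b).comp (continuous_const_mul _)
  have hq_lip : ∀ s t, |q s - q t| ≤ L * n * |s - t| := fun s t =>
    calc |q s - q t| ≤ L * |n * s - n * t| := abs_trigPoly_sub_le d a b _ _
      _ = L * n * |s - t| := by rw [← mul_sub, abs_mul, abs_of_pos hn', mul_assoc]
  have hq_int : ∀ A A', |∫ t in A..A', q t| ≤ M / n :=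
    abs_intervalIntegral_comp_mul_le hn' (abs_intervalIntegral_trigPoly_le d a b)
  refine ⟨dyadicAverage m q - dyadicAverage m' q, fun v _ x hx y hy => ?_,
    condExp_dyadicAverage_sub_ae_eq_zero (hq.integrableOn_Icc.mono_set Ico_subset_Icc_self) hm,
    fun x _ => ?_⟩
  · rw [← dyadicCell_natCast] at hx hy
    rw [Pi.sub_apply, Pi.sub_apply, dyadicAverage_eq_of_mem_dyadicCell le_rfl hx hy,
      dyadicAverage_eq_of_mem_dyadicCell hm hx hy]
  · calc |(dyadicAverage m q - dyadicAverage m' q) x - q x|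
        ≤ |dyadicAverage m q x - q x| + |dyadicAverage m' q x| := by
          rw [Pi.sub_apply, sub_right_comm]
          exact abs_sub _ _
      _ ≤ L * n / 2 ^ m + 2 ^ m' * (M / n) :=
          add_le_add (abs_dyadicAverage_sub_le hq hq_lip m x) (abs_dyadicAverage_le hq_int m' x)
      _ = L * (n / 2 ^ m) + M * (2 ^ m' / n) := by ring
      _ ≤ (L + M + 1) * (n / 2 ^ m + 2 ^ m' / n) := by
          have hX : 0 ≤ (n : ℝ) / 2 ^ m := by positivity
          have hY : 0 ≤ (2 : ℝ) ^ m' / n := by positivity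
          nlinarith [mul_nonneg hL hY, mul_nonneg hM hX]
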